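/- arXiv:0903.5060 — 3 statements merged into one kernel-verified Lean document; each statement's English description precedes it below -/
import Mathlib

section
/- (Deformation of a matched pair.) Let (H, G, α, β) be a matched pair of groups and (σ, v, r) a triple where σ ∈ Aut(H), v : G → G is a bijection, r : G → H is a map, v(1_G) = 1_G, r(1_G) = 1_H, and r(v⁻¹((v(g₁) ◁ r(g₂))·v(g₂))) = r(g₁)·(v(g₁) ▷ r(g₂)) for all g₁, g₂ ∈ G. Let (G, *) be the group with multiplication g₁ * g₂ := v⁻¹((v(g₁) ◁ r(g₂))·v(g₂)), and define β' : G × H → G and α' : G × H → H by g ◁' h := v⁻¹(v(g) ◁ σ(h)) and g ▷' h := σ⁻¹(r(g))·σ⁻¹(v(g) ▷ σ(h))·σ⁻¹(r(v⁻¹(v(g) ◁ σ(h)))⁻¹). Then (H, (G, *), α', β') is a matched pair of groups and ψ : H ⋈' (G, *) → H ⋈ G, ψ(h, g) := (σ(h)r(g), v(g)), is an isomorphism of groups satisfying ψ(h, 1_G) = (σ(h), 1_G) for all h ∈ H. -/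
/-!
The map `ψ` is a bijection, and the cocycle condition on `r` is exactly what makes it carry the
bicrossed-product formula built from `(*, α', β')` to the multiplication of `H ⋈ G`. The
compatibility laws of `α'` and `β'` are instances of associativity of that formula, on the triples
`(1, g₁) (1, g₂) (h, 1)` and `(1, g) (h₁, 1) (h₂, 1)`, so they pull back from associativity of
`H ⋈ G` along the injective `ψ`. The group laws of `*` and the unit laws are direct computations.
-/

/-- A matched pair of groups `(H, G, α, β)` in the sense of Takeuchi:
`act g h = g ▷ h` is a left action of the group `G` on the set `H`,
`coact g h = g ◁ h` is a right action of the group `H` on the set `G`, and the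
two compatibility conditions hold. -/
structure IsMatchedPair {H G : Type*} [Group H] [Group G]
    (act : G → H → H) (coact : G → H → G) : Prop where
  one_act : ∀ h, act 1 h = h
  mul_act : ∀ g₁ g₂ h, act (g₁ * g₂) h = act g₁ (act g₂ h)
  coact_one : ∀ g, coact g 1 = g
  coact_mul : ∀ g h₁ h₂, coact g (h₁ * h₂) = coact (coact g h₁) h₂
  act_mul : ∀ g h₁ h₂, act g (h₁ * h₂) = act g h₁ * act (coact g h₁) h₂
  mul_coact : ∀ g₁ g₂ h, coact (g₁ * g₂) h = coact g₁ (act g₂ h) * coact g₂ h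

namespace IsMatchedPair

variable {H G : Type*} [Group H] [Group G] {act : G → H → H} {coact : G → H → G}

theorem act_one (mp : IsMatchedPair act coact) (g : G) : act g 1 = 1 := by
  have h := mp.act_mul g 1 1
  rw [mp.coact_one, one_mul] at h
  exact (left_eq_mul.mp h)

theorem one_coact (mp : IsMatchedPair act coact) (h : H) : coact 1 h = 1 := by
  have e := mp.mul_coact 1 1 h
  rw [mp.one_act, one_mul] at e
  exact (left_eq_mul.mp e)

end IsMatchedPair

/-- The bicrossed product multiplication on the set `H × G`:
`(h₁, g₁) · (h₂, g₂) = (h₁ (g₁ ▷ h₂), (g₁ ◁ h₂) g₂)`. -/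
def bicrossMul {H G : Type*} [Group H] [Group G] (act : G → H → H) (coact : G → H → G)
    (x y : H × G) : H × G :=
  (x.1 * act x.2 y.1, coact x.2 y.1 * y.2)

namespace IsMatchedPair

variable {H G : Type*} [Group H] [Group G] {act : G → H → H} {coact : G → H → G}

theorem bicrossMul_assoc (mp : IsMatchedPair act coact) (x y z : H × G) :
    bicrossMul act coact (bicrossMul act coact x y) z =
      bicrossMul act coact x (bicrossMul act coact y z) := by
  simp only [bicrossMul, mp.act_mul, mp.mul_act, mp.coact_mul, mp.mul_coact, mul_assoc]

end IsMatchedPair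

/-- `bicrossMul` for a right factor `K` that is not yet known to be a group. -/
def bicrossMulWith {H K : Type*} [Mul H] (mulK : K → K → K) (act : K → H → H)
    (coact : K → H → K) (x y : H × K) : H × K :=
  (x.1 * act x.2 y.1, mulK (coact x.2 y.1) y.2)

section Transport

variable {H G K : Type*} [Group H] [Group G] {act : G → H → H} {coact : G → H → G}
  {mulK : K → K → K} {act' : K → H → H} {coact' : K → H → K} {ψ : H × K → H × G}

theorem map_act_coact_eq_bicrossMul [One K]
    (hψ : ∀ x y, ψ (bicrossMulWith mulK act' coact' x y) = bicrossMul act coact (ψ x) (ψ y))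
    (mul_one' : ∀ k, mulK k 1 = k) (k : K) (h : H) :
    ψ (act' k h, coact' k h) = bicrossMul act coact (ψ (1, k)) (ψ (h, 1)) := by
  simpa only [bicrossMulWith, one_mul, mul_one'] using hψ (1, k) (h, 1)

theorem map_one_mulK_eq_bicrossMul
    (hψ : ∀ x y, ψ (bicrossMulWith mulK act' coact' x y) = bicrossMul act coact (ψ x) (ψ y))
    (act'_one : ∀ k, act' k 1 = 1) (coact'_one : ∀ k, coact' k 1 = k) (k₁ k₂ : K) :
    ψ (1, mulK k₁ k₂) = bicrossMul act coact (ψ (1, k₁)) (ψ (1, k₂)) := by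
  simpa only [bicrossMulWith, act'_one, coact'_one, one_mul] using hψ (1, k₁) (1, k₂)

theorem map_mul_one_eq_bicrossMul [One K]
    (hψ : ∀ x y, ψ (bicrossMulWith mulK act' coact' x y) = bicrossMul act coact (ψ x) (ψ y))
    (mul_one' : ∀ k, mulK k 1 = k) (one_act' : ∀ h, act' 1 h = h)
    (one_coact' : ∀ h, coact' 1 h = 1) (h₁ h₂ : H) :
    ψ (h₁ * h₂, 1) = bicrossMul act coact (ψ (h₁, 1)) (ψ (h₂, 1)) := by
  simpa only [bicrossMulWith, one_act', one_coact', mul_one'] using hψ (h₁, 1) (h₂, 1)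

theorem act_coact_mulK_of_injective_hom [One K] (mp : IsMatchedPair act coact)
    (hinj : Function.Injective ψ)
    (hψ : ∀ x y, ψ (bicrossMulWith mulK act' coact' x y) = bicrossMul act coact (ψ x) (ψ y))
    (mul_one' : ∀ k, mulK k 1 = k) (act'_one : ∀ k, act' k 1 = 1)
    (coact'_one : ∀ k, coact' k 1 = k) (k₁ k₂ : K) (h : H) :
    (act' (mulK k₁ k₂) h, coact' (mulK k₁ k₂) h) =
      (act' k₁ (act' k₂ h), mulK (coact' k₁ (act' k₂ h)) (coact' k₂ h)) := by
  have hkey := map_act_coact_eq_bicrossMul hψ mul_one'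
  have hright := hψ (1, k₁) (act' k₂ h, coact' k₂ h)
  rw [bicrossMulWith, one_mul] at hright
  apply hinj
  rw [hkey, hright, hkey k₂ h, map_one_mulK_eq_bicrossMul hψ act'_one coact'_one,
    mp.bicrossMul_assoc]

theorem act_coact_mul_of_injective_hom [One K] (mp : IsMatchedPair act coact)
    (hinj : Function.Injective ψ)
    (hψ : ∀ x y, ψ (bicrossMulWith mulK act' coact' x y) = bicrossMul act coact (ψ x) (ψ y))
    (mul_one' : ∀ k, mulK k 1 = k) (one_act' : ∀ h, act' 1 h = h)
    (one_coact' : ∀ h, coact' 1 h = 1) (k : K) (h₁ h₂ : H) :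
    (act' k (h₁ * h₂), coact' k (h₁ * h₂)) =
      (act' k h₁ * act' (coact' k h₁) h₂, coact' (coact' k h₁) h₂) := by
  have hkey := map_act_coact_eq_bicrossMul hψ mul_one'
  have hleft := hψ (act' k h₁, coact' k h₁) (h₂, 1)
  rw [bicrossMulWith, mul_one'] at hleft
  apply hinj
  rw [hkey, hleft, hkey k h₁, map_mul_one_eq_bicrossMul hψ mul_one' one_act' one_coact',
    mp.bicrossMul_assoc]

end Transport

def deformedMul {H G : Type*} [Mul G] (coact : G → H → G) (v : G ≃ G) (r : G → H)
    (g₁ g₂ : G) : G :=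
  v.symm (coact (v g₁) (r g₂) * v g₂)

def deformedCoact {H G : Type*} [Mul H] (coact : G → H → G) (σ : H ≃* H) (v : G ≃ G) (g : G)
    (h : H) : G :=
  v.symm (coact (v g) (σ h))

def deformedAct {H G : Type*} [Group H] (act : G → H → H) (coact : G → H → G) (σ : H ≃* H)
    (v : G ≃ G) (r : G → H) (g : G) (h : H) : H :=
  σ.symm (r g) * σ.symm (act (v g) (σ h)) * σ.symm ((r (deformedCoact coact σ v g h))⁻¹)

def deformationMap {H G : Type*} [Mul H] (σ : H ≃* H) (v : G ≃ G) (r : G → H) (x : H × G) :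
    H × G :=
  (σ x.1 * r x.2, v x.2)

@[simp]
theorem apply_deformedMul {H G : Type*} [Mul G] {coact : G → H → G} {v : G ≃ G} {r : G → H}
    (g₁ g₂ : G) : v (deformedMul coact v r g₁ g₂) = coact (v g₁) (r g₂) * v g₂ :=
  v.apply_symm_apply _

@[simp]
theorem apply_deformedCoact {H G : Type*} [Mul H] {coact : G → H → G} {σ : H ≃* H} {v : G ≃ G}
    (g : G) (h : H) : v (deformedCoact coact σ v g h) = coact (v g) (σ h) :=
  v.apply_symm_apply _

theorem deformationMap_bijective {H G : Type*} [Group H] (σ : H ≃* H) (v : G ≃ G) (r : G → H) :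
    Function.Bijective (deformationMap σ v r) := by
  refine Function.bijective_iff_has_inverse.mpr
    ⟨fun p => (σ.symm (p.1 * (r (v.symm p.2))⁻¹), v.symm p.2), ?_, ?_⟩ <;>
  · intro p
    simp [deformationMap]

section Deformation

variable {H G : Type*} [Group H] [Group G] {act : G → H → H} {coact : G → H → G}
  {σ : H ≃* H} {v : G ≃ G} {r : G → H}

theorem deformedMul_one (mp : IsMatchedPair act coact) (hv1 : v 1 = 1) (hr1 : r 1 = 1)
    (g : G) : deformedMul coact v r g 1 = g := by
  rw [deformedMul, hr1, hv1, mp.coact_one, mul_one, v.symm_apply_apply]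

theorem one_deformedMul (mp : IsMatchedPair act coact) (hv1 : v 1 = 1) (g : G) :
    deformedMul coact v r 1 g = g := by
  rw [deformedMul, hv1, mp.one_coact, one_mul, v.symm_apply_apply]

theorem deformedMul_assoc (mp : IsMatchedPair act coact)
    (hcr : ∀ g₁ g₂, r (deformedMul coact v r g₁ g₂) = r g₁ * act (v g₁) (r g₂)) (a b c : G) :
    deformedMul coact v r (deformedMul coact v r a b) c =
      deformedMul coact v r a (deformedMul coact v r b c) := by
  apply v.injective
  simp only [apply_deformedMul, hcr, mp.mul_coact, mp.coact_mul, mul_assoc]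

theorem deformedMul_inv_left (mp : IsMatchedPair act coact) (hv1 : v 1 = 1) (g : G) :
    deformedMul coact v r (v.symm (coact (v g)⁻¹ (r g)⁻¹)) g = 1 := by
  rw [deformedMul, v.apply_symm_apply, ← mp.coact_mul, inv_mul_cancel, mp.coact_one,
    inv_mul_cancel, v.symm_apply_eq, hv1]

theorem exists_deformedMul_eq_one (mp : IsMatchedPair act coact) (hv1 : v 1 = 1)
    (hcr : ∀ g₁ g₂, r (deformedMul coact v r g₁ g₂) = r g₁ * act (v g₁) (r g₂)) (g : G) :
    ∃ g', deformedMul coact v r g' g = 1 ∧ deformedMul coact v r g g' = 1 := by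
  let deformed : Group G := @Group.ofLeftAxioms G ⟨deformedMul coact v r⟩
    ⟨fun g => v.symm (coact (v g)⁻¹ (r g)⁻¹)⟩ ⟨1⟩ (deformedMul_assoc mp hcr)
    (one_deformedMul mp hv1) (deformedMul_inv_left mp hv1)
  exact ⟨_, @inv_mul_cancel G deformed g, @mul_inv_cancel G deformed g⟩

theorem deformedCoact_one (mp : IsMatchedPair act coact) (g : G) :
    deformedCoact coact σ v g 1 = g := by
  rw [deformedCoact, map_one, mp.coact_one, v.symm_apply_apply]

theorem one_deformedCoact (mp : IsMatchedPair act coact) (hv1 : v 1 = 1) (h : H) :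
    deformedCoact coact σ v 1 h = 1 := by
  rw [deformedCoact, hv1, mp.one_coact, v.symm_apply_eq, hv1]

theorem deformedAct_one (mp : IsMatchedPair act coact) (g : G) :
    deformedAct act coact σ v r g 1 = 1 := by
  rw [deformedAct, deformedCoact_one mp, map_one, mp.act_one, map_one, mul_one, map_inv,
    mul_inv_cancel]

theorem one_deformedAct (mp : IsMatchedPair act coact) (hv1 : v 1 = 1) (hr1 : r 1 = 1)
    (h : H) : deformedAct act coact σ v r 1 h = h := by
  rw [deformedAct, one_deformedCoact mp hv1, hv1, mp.one_act, hr1, inv_one, map_one,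
    σ.symm_apply_apply, one_mul, mul_one]

theorem deformationMap_bicrossMulWith (mp : IsMatchedPair act coact)
    (hcr : ∀ g₁ g₂, r (deformedMul coact v r g₁ g₂) = r g₁ * act (v g₁) (r g₂))
    (x y : H × G) :
    deformationMap σ v r (bicrossMulWith (deformedMul coact v r) (deformedAct act coact σ v r)
      (deformedCoact coact σ v) x y) =
        bicrossMul act coact (deformationMap σ v r x) (deformationMap σ v r y) := by
  obtain ⟨h₁, g₁⟩ := x
  obtain ⟨h₂, g₂⟩ := y
  simp only [deformationMap, bicrossMulWith, bicrossMul, deformedAct, hcr, apply_deformedMul,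
    apply_deformedCoact, map_mul, MulEquiv.apply_symm_apply, mp.act_mul, mp.coact_mul,
    mul_assoc, inv_mul_cancel_left]

theorem deformationMap_one_right (hv1 : v 1 = 1) (hr1 : r 1 = 1) (h : H) :
    deformationMap σ v r (h, 1) = (σ h, 1) := by
  rw [deformationMap, hr1, hv1, mul_one]

end Deformation

/-- **Deformation of a matched pair.** Given a matched pair `(H, G, act, coact)`
and a triple `(σ, v, r)` with `σ ∈ Aut(H)`, `v : G → G` bijective, `r : G → H`,
`v(1) = 1`, `r(1) = 1` and `r(v⁻¹((v(g₁) ◁ r(g₂))·v(g₂))) = r(g₁)·(v(g₁) ▷ r(g₂))`: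
the set `G` with the deformed multiplication `*` is a group, the deformed actions
`α'`, `β'` make `(H, (G, *), α', β')` a matched pair, and
`ψ(h, g) = (σ(h)r(g), v(g))` is an isomorphism of groups
`H ⋈' (G, *) → H ⋈ G` with `ψ(h, 1) = (σ(h), 1)`. -/
theorem matchedPair_deformation {H G : Type*} [Group H] [Group G]
    {act : G → H → H} {coact : G → H → G} (mp : IsMatchedPair act coact)
    (σ : H ≃* H) (v : G ≃ G) (r : G → H)
    (hv1 : v 1 = 1) (hr1 : r 1 = 1)
    (hcr : ∀ g₁ g₂ : G,
      r (v.symm (coact (v g₁) (r g₂) * v g₂)) = r g₁ * act (v g₁) (r g₂)) :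
    let mulStar : G → G → G := fun g₁ g₂ => v.symm (coact (v g₁) (r g₂) * v g₂)
    let coact' : G → H → G := fun g h => v.symm (coact (v g) (σ h))
    let act' : G → H → H := fun g h =>
      σ.symm (r g) * σ.symm (act (v g) (σ h)) *
        σ.symm ((r (v.symm (coact (v g) (σ h))))⁻¹)
    let ψ : H × G → H × G := fun x => (σ x.1 * r x.2, v x.2)
    -- (G, *) is a group with unit 1
    ((∀ g₁ g₂ g₃ : G, mulStar (mulStar g₁ g₂) g₃ = mulStar g₁ (mulStar g₂ g₃)) ∧
      (∀ g : G, mulStar 1 g = g) ∧ (∀ g : G, mulStar g 1 = g) ∧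
      (∀ g : G, ∃ g' : G, mulStar g' g = 1 ∧ mulStar g g' = 1)) ∧
    -- (H, (G, *), act', coact') is a matched pair
    ((∀ h : H, act' 1 h = h) ∧
      (∀ (g₁ g₂ : G) (h : H), act' (mulStar g₁ g₂) h = act' g₁ (act' g₂ h)) ∧
      (∀ g : G, coact' g 1 = g) ∧
      (∀ (g : G) (h₁ h₂ : H), coact' g (h₁ * h₂) = coact' (coact' g h₁) h₂) ∧
      (∀ (g : G) (h₁ h₂ : H),
        act' g (h₁ * h₂) = act' g h₁ * act' (coact' g h₁) h₂) ∧
      (∀ (g₁ g₂ : G) (h : H),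
        coact' (mulStar g₁ g₂) h = mulStar (coact' g₁ (act' g₂ h)) (coact' g₂ h))) ∧
    -- ψ is an isomorphism of groups H ⋈' (G,*) → H ⋈ G with ψ(h,1) = (σ h, 1)
    ((∀ x y : H × G,
        ψ (x.1 * act' x.2 y.1, mulStar (coact' x.2 y.1) y.2) =
          bicrossMul act coact (ψ x) (ψ y)) ∧
      Function.Bijective ψ ∧ ∀ h : H, ψ (h, 1) = (σ h, 1)) := by
  intro mulStar coact' act' ψ
  have hinj : Function.Injective ψ := (deformationMap_bijective σ v r).injective
  have hψ : ∀ x y, ψ (x.1 * act' x.2 y.1, mulStar (coact' x.2 y.1) y.2) =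
      bicrossMul act coact (ψ x) (ψ y) :=
    deformationMap_bicrossMulWith mp hcr
  have compat_mulG g₁ g₂ h := act_coact_mulK_of_injective_hom mp hinj hψ
    (deformedMul_one mp hv1 hr1) (deformedAct_one mp) (deformedCoact_one mp) g₁ g₂ h
  have compat_mulH g h₁ h₂ := act_coact_mul_of_injective_hom mp hinj hψ
    (deformedMul_one mp hv1 hr1) (one_deformedAct mp hv1 hr1) (one_deformedCoact mp hv1) g h₁ h₂
  exact ⟨⟨deformedMul_assoc mp hcr, one_deformedMul mp hv1, deformedMul_one mp hv1 hr1,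
      exists_deformedMul_eq_one mp hv1 hcr⟩,
    ⟨one_deformedAct mp hv1 hr1, fun g₁ g₂ h => congrArg Prod.fst (compat_mulG g₁ g₂ h),
      deformedCoact_one mp, fun g h₁ h₂ => congrArg Prod.snd (compat_mulH g h₁ h₂),
      fun g h₁ h₂ => congrArg Prod.fst (compat_mulH g h₁ h₂),
      fun g₁ g₂ h => congrArg Prod.snd (compat_mulG g₁ g₂ h)⟩,
    ⟨hψ, deformationMap_bijective σ v r, deformationMap_one_right hv1 hr1⟩⟩
end

section
/- Let H, G be groups, let β : G × H → G be an action of H on G as group automorphisms (written g ◁ h), and let (H, G, α', β') be a matched pair (actions ▷', ◁'). The following are equivalent: (1) there exists a group isomorphism ψ : H ⋈' G → H ⋊_β G with ψ(h, 1_G) = (h, 1_G) for all h ∈ H; (2) there exists a pair (r, v) where r : G → H is a group homomorphism and v : G → G is a bijection such that v(g₁g₂) = (v(g₁) ◁ r(g₂))·v(g₂) for all g₁, g₂ ∈ G, and the actions α', β' are given by g ▷' h = r(g)·h·(r(v⁻¹(v(g) ◁ h)))⁻¹ and g ◁' h = v⁻¹(v(g) ◁ h) for all g ∈ G, h ∈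 H. In this case the isomorphism is given by ψ(h, g) = (h r(g), v(g)). -/
/-!
An isomorphism `ψ` fixing `H` is determined by its restriction to `G`: since
`(h, g) = (h, 1)(1, g)` in `H ⋈' G`, we get `ψ(h, g) = (h, 1) ψ(1, g) = (h r(g), v(g))`.
Evaluating multiplicativity of this map on `(1, g₁)(1, g₂)` yields that `r` is a homomorphism
and `v` satisfies the cocycle identity, and on `(1, g)(h, 1) = (g ▷' h, g ◁' h)` it yields the
two formulas for the matched pair actions. Conversely, these identities make
`(h, g) ↦ (h r(g), v(g))` multiplicative by direct computation.
-/

namespace IsMatchedPair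

variable {H G : Type*} [Group H] [Group G] {act : G → H → H} {coact : G → H → G}

theorem bicrossMul_mk_one_one_mk (mp : IsMatchedPair act coact) (h : H) (g : G) :
    bicrossMul act coact (h, 1) (1, g) = (h, g) := by
  simp [bicrossMul, mp.act_one, mp.coact_one]

theorem bicrossMul_one_mk_one_mk (mp : IsMatchedPair act coact) (g₁ g₂ : G) :
    bicrossMul act coact (1, g₁) (1, g₂) = (1, g₁ * g₂) := by
  simp [bicrossMul, mp.act_one, mp.coact_one]

end IsMatchedPair

section

variable {H G : Type*} [Group H] [Group G]

theorem bicrossMul_one_mk_mk_one (act : G → H → H) (coact : G → H → G) (g : G) (h : H) :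
    bicrossMul act coact (1, g) (h, 1) = (act g h, coact g h) := by
  simp [bicrossMul]

/-- The map `(h, g) ↦ (h r(g), v(g))`, the shape of every isomorphism `H ⋈' G → H ⋊ G`
fixing `H`. -/
def shearMap (r : G → H) (v : G → G) (x : H × G) : H × G :=
  (x.1 * r x.2, v x.2)

theorem bijective_shearMap_iff (r : G → H) (v : G → G) :
    Function.Bijective (shearMap r v) ↔ Function.Bijective v := by
  let shear : H × G ≃ H × G :=
    { toFun := fun x => (x.1 * r x.2, x.2)
      invFun := fun x => (x.1 * (r x.2)⁻¹, x.2)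
      left_inv := fun x => by simp
      right_inv := fun x => by simp }
  have : shearMap r v = Prod.map id v ∘ shear := rfl
  rw [this, Equiv.bijective_comp, Prod.map_bijective]
  simp [Function.bijective_id]

/-- `ψ` is an isomorphism `H ⋈' G ≃* H ⋊ G` fixing `H`; the semidirect product `H ⋊ G` is the
bicrossed product whose left action is trivial. -/
def IsBicrossSemidirectIso (act' : G → H → H) (coact' coact : G → H → G) (ψ : H × G → H × G) :
    Prop :=
  (∀ x y : H × G, ψ (bicrossMul act' coact' x y) =
      bicrossMul (fun (_ : G) (h : H) => h) coact (ψ x) (ψ y)) ∧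
    Function.Bijective ψ ∧ ∀ h : H, ψ (h, 1) = (h, 1)

variable {coact : G → H → G}

theorem eq_one_of_cocycle (h1 : ∀ g : G, coact g 1 = g) {r : G → H} {v : G → G}
    (hr1 : r 1 = 1) (hv : ∀ g₁ g₂ : G, v (g₁ * g₂) = coact (v g₁) (r g₂) * v g₂) : v 1 = 1 := by
  have := hv 1 1
  rwa [one_mul, hr1, h1, left_eq_mul] at this

theorem exists_eq_shearMap_of_map_bicrossMul
    (h3 : ∀ (g₁ g₂ : G) (h : H), coact (g₁ * g₂) h = coact g₁ h * coact g₂ h)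
    {act' : G → H → H} {coact' : G → H → G} (mp' : IsMatchedPair act' coact')
    {ψ : H × G → H × G}
    (hmul : ∀ x y : H × G, ψ (bicrossMul act' coact' x y) =
      bicrossMul (fun (_ : G) (h : H) => h) coact (ψ x) (ψ y))
    (hfix : ∀ h : H, ψ (h, 1) = (h, 1)) :
    ∃ (r : G → H) (v : G → G), ψ = shearMap r v := by
  refine ⟨fun g => (ψ (1, g)).1, fun g => (ψ (1, g)).2, funext fun ⟨h, g⟩ => ?_⟩
  have hcoact_one (h : H) : coact 1 h = 1 := (MonoidHom.mk' (coact · h) (h3 · · h)).map_one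
  calc ψ (h, g) = ψ (bicrossMul act' coact' (h, 1) (1, g)) := by
        rw [mp'.bicrossMul_mk_one_one_mk]
    _ = _ := by
        rw [hmul, hfix]
        simp [bicrossMul, shearMap, hcoact_one]

variable {act' : G → H → H} {coact' : G → H → G} {r : G → H} {v : G ≃ G}

theorem map_bicrossMul_of_matching
    (h2 : ∀ (g : G) (h₁ h₂ : H), coact g (h₁ * h₂) = coact (coact g h₁) h₂)
    (hr : ∀ g₁ g₂ : G, r (g₁ * g₂) = r g₁ * r g₂)
    (hv : ∀ g₁ g₂ : G, v (g₁ * g₂) = coact (v g₁) (r g₂) * v g₂)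
    (hact : ∀ (g : G) (h : H), act' g h = r g * h * (r (v.symm (coact (v g) h)))⁻¹)
    (hcoact : ∀ (g : G) (h : H), coact' g h = v.symm (coact (v g) h)) (x y : H × G) :
    shearMap r v (bicrossMul act' coact' x y) =
      bicrossMul (fun (_ : G) (h : H) => h) coact (shearMap r v x) (shearMap r v y) := by
  simp only [shearMap, bicrossMul, Prod.mk.injEq]
  constructor
  · rw [hr, hact, hcoact]
    group
  · simp only [hv, hcoact, Equiv.apply_symm_apply, h2]

theorem matching_of_map_bicrossMul (h1 : ∀ g : G, coact g 1 = g)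
    (mp' : IsMatchedPair act' coact')
    (hmul : ∀ x y : H × G, shearMap r v (bicrossMul act' coact' x y) =
      bicrossMul (fun (_ : G) (h : H) => h) coact (shearMap r v x) (shearMap r v y)) :
    (∀ g₁ g₂ : G, r (g₁ * g₂) = r g₁ * r g₂) ∧
      (∀ g₁ g₂ : G, v (g₁ * g₂) = coact (v g₁) (r g₂) * v g₂) ∧
      (∀ (g : G) (h : H), act' g h = r g * h * (r (v.symm (coact (v g) h)))⁻¹) ∧
      (∀ (g : G) (h : H), coact' g h = v.symm (coact (v g) h)) := by
  have on_G (g₁ g₂ : G) :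
      r (g₁ * g₂) = r g₁ * r g₂ ∧ v (g₁ * g₂) = coact (v g₁) (r g₂) * v g₂ := by
    have := hmul (1, g₁) (1, g₂)
    rw [mp'.bicrossMul_one_mk_one_mk] at this
    simpa [shearMap, bicrossMul] using this
  have hr g₁ g₂ := (on_G g₁ g₂).1
  have hv g₁ g₂ := (on_G g₁ g₂).2
  have hr1 : r 1 = 1 := (MonoidHom.mk' r hr).map_one
  have hv1 : v 1 = 1 := eq_one_of_cocycle h1 hr1 hv
  have exchange (g : G) (h : H) :
      act' g h * r (coact' g h) = r g * h ∧ v (coact' g h) = coact (v g) h := by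
    have := hmul (1, g) (h, 1)
    rw [bicrossMul_one_mk_mk_one] at this
    simpa [shearMap, bicrossMul, hr1, hv1] using this
  have hcoact g h : coact' g h = v.symm (coact (v g) h) :=
    Equiv.eq_symm_apply _ |>.2 (exchange g h).2
  refine ⟨hr, hv, fun g h => ?_, hcoact⟩
  rw [← hcoact, ← (exchange g h).1, mul_inv_cancel_right]

theorem isBicrossSemidirectIso_shearMap (h1 : ∀ g : G, coact g 1 = g)
    (h2 : ∀ (g : G) (h₁ h₂ : H), coact g (h₁ * h₂) = coact (coact g h₁) h₂)
    (hr : ∀ g₁ g₂ : G, r (g₁ * g₂) = r g₁ * r g₂)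
    (hv : ∀ g₁ g₂ : G, v (g₁ * g₂) = coact (v g₁) (r g₂) * v g₂)
    (hact : ∀ (g : G) (h : H), act' g h = r g * h * (r (v.symm (coact (v g) h)))⁻¹)
    (hcoact : ∀ (g : G) (h : H), coact' g h = v.symm (coact (v g) h)) :
    IsBicrossSemidirectIso act' coact' coact (shearMap r v) := by
  have hr1 : r 1 = 1 := (MonoidHom.mk' r hr).map_one
  refine ⟨map_bicrossMul_of_matching h2 hr hv hact hcoact,
    (bijective_shearMap_iff r v).2 v.bijective, fun h => ?_⟩
  simp [shearMap, hr1, eq_one_of_cocycle h1 hr1 hv]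

end

/-- A bicrossed product `H ⋈' G` is isomorphic, by an isomorphism fixing `H`, to a
right semidirect product `H ⋊_β G` (for `β` an action of `H` on `G` as group
automorphisms) if and only if there is a pair `(r, v)` with `r : G → H` a group
homomorphism and `v : G → G` a bijection with `v(g₁g₂) = (v(g₁) ◁ r(g₂))v(g₂)`
such that `g ▷' h = r(g)·h·(r(v⁻¹(v(g) ◁ h)))⁻¹` and `g ◁' h = v⁻¹(v(g) ◁ h)`;
in this case the isomorphism is `ψ(h, g) = (h r(g), v(g))`. -/
theorem bicross_iso_rightSemidirect_iff {H G : Type*} [Group H] [Group G]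
    {coact : G → H → G} {act' : G → H → H} {coact' : G → H → G}
    (h1 : ∀ g : G, coact g 1 = g)
    (h2 : ∀ (g : G) (h₁ h₂ : H), coact g (h₁ * h₂) = coact (coact g h₁) h₂)
    (h3 : ∀ (g₁ g₂ : G) (h : H), coact (g₁ * g₂) h = coact g₁ h * coact g₂ h)
    (mp' : IsMatchedPair act' coact') :
    ((∃ ψ : H × G → H × G,
        (∀ x y : H × G,
          ψ (bicrossMul act' coact' x y) =
            bicrossMul (fun (_ : G) (h : H) => h) coact (ψ x) (ψ y)) ∧
        Function.Bijective ψ ∧ ∀ h : H, ψ (h, 1) = (h, 1)) ↔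
      (∃ (r : G → H) (v : G ≃ G),
        (∀ g₁ g₂ : G, r (g₁ * g₂) = r g₁ * r g₂) ∧
        (∀ g₁ g₂ : G, v (g₁ * g₂) = coact (v g₁) (r g₂) * v g₂) ∧
        (∀ (g : G) (h : H), act' g h = r g * h * (r (v.symm (coact (v g) h)))⁻¹) ∧
        (∀ (g : G) (h : H), coact' g h = v.symm (coact (v g) h)))) ∧
    ∀ (r : G → H) (v : G ≃ G),
      (∀ g₁ g₂ : G, r (g₁ * g₂) = r g₁ * r g₂) →
      (∀ g₁ g₂ : G, v (g₁ * g₂) = coact (v g₁) (r g₂) * v g₂) →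
      (∀ (g : G) (h : H), act' g h = r g * h * (r (v.symm (coact (v g) h)))⁻¹) →
      (∀ (g : G) (h : H), coact' g h = v.symm (coact (v g) h)) →
      ((∀ x y : H × G,
          (fun x : H × G => (x.1 * r x.2, v x.2)) (bicrossMul act' coact' x y) =
            bicrossMul (fun (_ : G) (h : H) => h) coact
              ((fun x : H × G => (x.1 * r x.2, v x.2)) x)
              ((fun x : H × G => (x.1 * r x.2, v x.2)) y)) ∧
        Function.Bijective (fun x : H × G => (x.1 * r x.2, v x.2)) ∧
        ∀ h : H, (fun x : H × G => (x.1 * r x.2, v x.2)) (h, 1) = (h, 1)) := by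
  refine ⟨⟨?_, fun ⟨r, v, hr, hv, hact, hcoact⟩ =>
    ⟨_, isBicrossSemidirectIso_shearMap h1 h2 hr hv hact hcoact⟩⟩,
    fun _ _ hr hv hact hcoact => isBicrossSemidirectIso_shearMap h1 h2 hr hv hact hcoact⟩
  rintro ⟨ψ, hmul, hbij, hfix⟩
  obtain ⟨r, v, rfl⟩ := exists_eq_shearMap_of_map_bicrossMul h3 mp' hmul hfix
  exact ⟨r, Equiv.ofBijective v ((bijective_shearMap_iff r v).1 hbij),
    matching_of_map_bicrossMul h1 mp' hmul⟩
end

section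
/- Let H, G be groups, β : G × H → G a right action (written g ◁ h), and let (H, G, α', β) and (H, G, α, β) be two matched pairs sharing the same β (left actions written ▷' and ▷). Set Ker(β) := {h ∈ H | g ◁ h = g for all g ∈ G}. Then there is a one-to-one correspondence between group homomorphisms ψ : H ⋈' G → H ⋈ G satisfying ψ(h, 1_G) = (h, 1_G) for all h ∈ H and π_G ∘ ψ = π_G (where π_G : H × G → G is the projection), and maps r : G → Ker(β) satisfying (g ▷' h)·r(g ◁ h) = r(g)·(g ▷ h) and r(g₁g₂) = r(g₁)·(g₁ ▷ r(g₂)) for all g, g₁, g₂ ∈ G, h ∈ H; the correspondence is ψ(h, g) = (h r(g), g). Moreover every such ψ is an isomorphism of groups. -/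
/-!
Since `(h, g) = (h, 1) · (1, g)` in `H ⋈' G`, a homomorphism `ψ` fixing `H` and preserving
`π_G` is determined by `r g := (ψ (1, g)).1`, namely `ψ (h, g) = (h r(g), g)`. Multiplicativity
of such a twist on the products `(1, g₁) · (1, g₂)` is the cocycle identity together with
`r(g) ∈ Ker β`, and on `(1, g) · (h, 1)` it is the compatibility of `r` with `▷'` and `▷`;
conversely these identities make the twist multiplicative. Every twist is bijective, with
inverse `(h, g) ↦ (h r(g)⁻¹, g)`.
-/

def bicrossTwist {H G : Type*} [Mul H] (r : G → H) (x : H × G) : H × G :=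
  (x.1 * r x.2, x.2)

theorem bicrossTwist_injective {H G : Type*} [Group H] :
    Function.Injective (bicrossTwist : (G → H) → H × G → H × G) :=
  fun r r' hrr' => funext fun g => by
    simpa [bicrossTwist] using congrArg Prod.fst (congrFun hrr' (1, g))

theorem bicrossTwist_bijective {H G : Type*} [Group H] (r : G → H) :
    Function.Bijective (bicrossTwist r) :=
  Function.bijective_iff_has_inverse.mpr
    ⟨fun x => (x.1 * (r x.2)⁻¹, x.2), fun x => by simp [bicrossTwist],
      fun x => by simp [bicrossTwist]⟩

section BicrossTwist

variable {H G : Type*} [Group H] [Group G] {act act' : G → H → H} {coact : G → H → G}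

theorem IsMatchedPair.bicrossMul_mk_one_one_mk_s15 (mp : IsMatchedPair act coact) (h : H) (g : G) :
    bicrossMul act coact (h, 1) (1, g) = (h, g) := by
  simp [bicrossMul, mp.one_act, mp.coact_one]

theorem IsMatchedPair.bicrossMul_one_mk_one_mk_s15 (mp : IsMatchedPair act coact) (g₁ g₂ : G) :
    bicrossMul act coact (1, g₁) (1, g₂) = (1, g₁ * g₂) := by
  simp [bicrossMul, mp.act_one, mp.coact_one]

theorem IsMatchedPair.map_one_of_cocycle (mp : IsMatchedPair act coact) {r : G → H}
    (hr : ∀ g₁ g₂ : G, r (g₁ * g₂) = r g₁ * act g₁ (r g₂)) : r 1 = 1 := by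
  have h := hr 1 1
  rw [one_mul, mp.one_act] at h
  exact left_eq_mul.mp h

/-- `coact_eq` says that `r` takes values in `Ker β`. -/
structure IsBicrossTwist (act' act : G → H → H) (coact : G → H → G) (r : G → H) : Prop where
  coact_eq : ∀ g x : G, coact x (r g) = x
  act_mul_comm : ∀ (g : G) (h : H), act' g h * r (coact g h) = r g * act g h
  map_mul : ∀ g₁ g₂ : G, r (g₁ * g₂) = r g₁ * act g₁ (r g₂)

theorem bicrossTwist_mk_one {r : G → H} (hr1 : r 1 = 1) (h : H) :
    bicrossTwist r (h, 1) = (h, 1) := by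
  simp [bicrossTwist, hr1]

theorem IsBicrossTwist.bicrossTwist_bicrossMul {r : G → H} (hr : IsBicrossTwist act' act coact r)
    (mp : IsMatchedPair act coact) (x y : H × G) :
    bicrossTwist r (bicrossMul act' coact x y) =
      bicrossMul act coact (bicrossTwist r x) (bicrossTwist r y) := by
  simp only [bicrossTwist, bicrossMul, Prod.mk.injEq]
  constructor
  · calc x.1 * act' x.2 y.1 * r (coact x.2 y.1 * y.2)
        = x.1 * (act' x.2 y.1 * r (coact x.2 y.1)) * act (coact x.2 y.1) (r y.2) := by
          rw [hr.map_mul]; group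
      _ = x.1 * r x.2 * act x.2 (y.1 * r y.2) := by
          rw [hr.act_mul_comm, mp.act_mul]; group
  · rw [mp.coact_mul, hr.coact_eq]

theorem IsBicrossTwist.of_bicrossTwist_bicrossMul {r : G → H} (mp' : IsMatchedPair act' coact)
    (mp : IsMatchedPair act coact)
    (hom : ∀ x y : H × G, bicrossTwist r (bicrossMul act' coact x y) =
      bicrossMul act coact (bicrossTwist r x) (bicrossTwist r y)) :
    IsBicrossTwist act' act coact r := by
  have hG (g₁ g₂ : G) :
      (r (g₁ * g₂), g₁ * g₂) = (r g₁ * act g₁ (r g₂), coact g₁ (r g₂) * g₂) := by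
    have h := hom (1, g₁) (1, g₂)
    rw [mp'.bicrossMul_one_mk_one_mk_s15] at h
    simpa [bicrossTwist, bicrossMul] using h
  have map_mul g₁ g₂ := congrArg Prod.fst (hG g₁ g₂)
  have hr1 : r 1 = 1 := mp.map_one_of_cocycle map_mul
  refine ⟨fun g x => ?_, fun g h => ?_, map_mul⟩
  · exact (mul_left_inj g).mp (congrArg Prod.snd (hG x g)).symm
  · simpa [bicrossTwist, bicrossMul, hr1] using congrArg Prod.fst (hom (1, g) (h, 1))

theorem eq_bicrossTwist_of_map_mul {ψ : H × G → H × G} (mp' : IsMatchedPair act' coact)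
    (mp : IsMatchedPair act coact)
    (hom : ∀ x y : H × G, ψ (bicrossMul act' coact x y) = bicrossMul act coact (ψ x) (ψ y))
    (hH : ∀ h : H, ψ (h, 1) = (h, 1)) (hG : ∀ x : H × G, (ψ x).2 = x.2) :
    ψ = bicrossTwist fun g => (ψ (1, g)).1 := by
  funext ⟨h, g⟩
  calc ψ (h, g) = ψ (bicrossMul act' coact (h, 1) (1, g)) := by
        rw [mp'.bicrossMul_mk_one_one_mk_s15]
    _ = bicrossMul act coact (h, 1) (ψ (1, g)) := by rw [hom, hH]
    _ = _ := by simp [bicrossMul, bicrossTwist, hG, mp.one_act, mp.one_coact]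

end BicrossTwist

/-- For two matched pairs `(H, G, α', β)` and `(H, G, α, β)` sharing the same
right action `β`, there is a one-to-one correspondence between group homomorphisms
`ψ : H ⋈' G → H ⋈ G` with `ψ(h, 1) = (h, 1)` and `π_G ∘ ψ = π_G`, and maps
`r : G → Ker(β)` satisfying `(g ▷' h)r(g ◁ h) = r(g)(g ▷ h)` and
`r(g₁g₂) = r(g₁)(g₁ ▷ r(g₂))`; the correspondence is `ψ(h, g) = (h r(g), g)` and
every such `ψ` is an isomorphism of groups. -/
theorem bicross_hom_fixing_H_and_G_correspondence {H G : Type*} [Group H] [Group G]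
    {act : G → H → H} {act' : G → H → H} {coact : G → H → G}
    (mp' : IsMatchedPair act' coact) (mp : IsMatchedPair act coact) :
    (∀ r : G → H,
      (∀ g x : G, coact x (r g) = x) →
      (∀ (g : G) (h : H), act' g h * r (coact g h) = r g * act g h) →
      (∀ g₁ g₂ : G, r (g₁ * g₂) = r g₁ * act g₁ (r g₂)) →
      ((∀ x y : H × G,
          (fun x : H × G => (x.1 * r x.2, x.2)) (bicrossMul act' coact x y) =
            bicrossMul act coact ((fun x : H × G => (x.1 * r x.2, x.2)) x)
              ((fun x : H × G => (x.1 * r x.2, x.2)) y)) ∧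
        (∀ h : H, (fun x : H × G => (x.1 * r x.2, x.2)) ((h, 1) : H × G) = (h, 1)) ∧
        (∀ x : H × G, ((fun x : H × G => (x.1 * r x.2, x.2)) x).2 = x.2) ∧
        Function.Bijective (fun x : H × G => (x.1 * r x.2, x.2)))) ∧
    ∀ ψ : H × G → H × G,
      (∀ x y : H × G,
        ψ (bicrossMul act' coact x y) = bicrossMul act coact (ψ x) (ψ y)) →
      (∀ h : H, ψ (h, 1) = (h, 1)) →
      (∀ x : H × G, (ψ x).2 = x.2) →
      ∃! r : G → H,
        (∀ g x : G, coact x (r g) = x) ∧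
        (∀ (g : G) (h : H), act' g h * r (coact g h) = r g * act g h) ∧
        (∀ g₁ g₂ : G, r (g₁ * g₂) = r g₁ * act g₁ (r g₂)) ∧
        ∀ x : H × G, ψ x = (x.1 * r x.2, x.2) := by
  refine ⟨fun r hker hcomp hmul => ?_, fun ψ hom hH hG => ?_⟩
  · have hr : IsBicrossTwist act' act coact r := ⟨hker, hcomp, hmul⟩
    exact ⟨hr.bicrossTwist_bicrossMul mp, bicrossTwist_mk_one (mp.map_one_of_cocycle hmul),
      fun _ => rfl, bicrossTwist_bijective r⟩
  · have hψ := eq_bicrossTwist_of_map_mul mp' mp hom hH hG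
    rw [hψ] at hom
    have hr := IsBicrossTwist.of_bicrossTwist_bicrossMul mp' mp hom
    refine ⟨_, ⟨hr.coact_eq, hr.act_mul_comm, hr.map_mul, congrFun hψ⟩, ?_⟩
    rintro r' ⟨-, -, -, hψ'⟩
    exact bicrossTwist_injective ((funext hψ').symm.trans hψ)
end
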